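/- Let $V$ be a finite-dimensional real vector space and $c : V \to \mathbb C$ a charge on $X \subset V \setminus \{0\}$ (an $\mathbb R$-linear map with $0 \notin c(X)$ and $\operatorname{span}_{\ge 0}c(X) \cap (-\operatorname{span}_{\ge 0}c(X)) = \{0\}$). Let $\arg_c : X \to \mathbb R$ be a continuous argument function of $c$ on $X$. Then the binary relation $x \preceq_c y$ iff $\arg_c x \le \arg_c y$ is a convex preorder on $X$. -/

import Mathlib

open scoped BigOperators

/-- `nnspan S` is the set of finite linear combinations of elements of `S`
with non-negative real coefficients (by convention `nnspan ∅ = {0}`). -/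
def nnspan {V : Type*} [AddCommGroup V] [Module ℝ V] (S : Set V) : Set V :=
  {x | ∃ (n : ℕ) (c : Fin n → ℝ) (v : Fin n → V),
    (∀ i, 0 ≤ c i) ∧ (∀ i, v i ∈ S) ∧ x = ∑ i, c i • v i}

/-- Minkowski sum of two subsets of `V`. -/
def setAdd {V : Type*} [AddCommGroup V] [Module ℝ V] (A B : Set V) : Set V :=
  {z | ∃ a ∈ A, ∃ b ∈ B, z = a + b}

/-- Elements of `X` strictly below `x` for the preorder `le`. -/
def strictBelow {V : Type*} [AddCommGroup V] [Module ℝ V]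
    (le : V → V → Prop) (x : V) (X : Set V) : Set V :=
  {y ∈ X | le y x ∧ ¬ le x y}

/-- Elements of `X` strictly above `x` for the preorder `le`. -/
def strictAbove {V : Type*} [AddCommGroup V] [Module ℝ V]
    (le : V → V → Prop) (x : V) (X : Set V) : Set V :=
  {y ∈ X | le x y ∧ ¬ le y x}

/-- The `le`-equivalence class of `x` inside `X`. -/
def eqClass {V : Type*} [AddCommGroup V] [Module ℝ V]
    (le : V → V → Prop) (x : V) (X : Set V) : Set V :=
  {y ∈ X | le x y ∧ le y x}

/-- A convex preorder on `X ⊆ V \ {0}`: a total preorder on `X` such that for every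
equivalence class `𝒞`, the triple (strictly below `𝒞`, `𝒞`, strictly above `𝒞`) is a
face, i.e. for any non-negative combinations `x₋` (of the strictly-below set) and `x₊`
(of the strictly-above set) with `x₋ - x₊ ∈ span ℝ 𝒞`, one has `x₋ = x₊ = 0`. -/
def IsConvexPreorder {V : Type*} [AddCommGroup V] [Module ℝ V]
    (X : Set V) (le : V → V → Prop) : Prop :=
  (∀ x ∈ X, le x x) ∧
  (∀ x ∈ X, ∀ y ∈ X, ∀ z ∈ X, le x y → le y z → le x z) ∧
  (∀ x ∈ X, ∀ y ∈ X, le x y ∨ le y x) ∧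
  (∀ x ∈ X, ∀ xm ∈ nnspan (strictBelow le x X), ∀ xp ∈ nnspan (strictAbove le x X),
    xm - xp ∈ Submodule.span ℝ (eqClass le x X) → xm = 0 ∧ xp = 0)

/-!
Fix `x ∈ X`, put `α = arg_c x` and consider the real functional `v ↦ Im (e^{-iα} c v)`, which
equals `‖c y‖ sin (arg_c y - α)` at `y ∈ X`. As all arguments lie in an interval of length `π`,
the arguments of elements strictly below (above) `x` lie in `[α - π, α)` (in `(α, α + π]`), and
salience of `c(X)` excludes the endpoints `α ∓ π`. So the functional is negative strictly below
`x`, positive strictly above `x` and zero on the class of `x`: it separates the two cones and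
kills the span of the class, which forces `x₋ = x₊ = 0`.
-/

open Complex

section NonnegSpan

variable {V : Type*} [AddCommGroup V] [Module ℝ V]

lemma smul_mem_nnspan {S : Set V} {a : V} (ha : a ∈ S) {r : ℝ} (hr : 0 ≤ r) :
    r • a ∈ nnspan S :=
  ⟨1, fun _ => r, fun _ => a, fun _ => hr, fun _ => ha, by simp⟩

lemma map_nonneg_of_mem_nnspan (g : V →ₗ[ℝ] ℝ) {S : Set V} (hS : ∀ y ∈ S, 0 ≤ g y)
    {w : V} (hw : w ∈ nnspan S) : 0 ≤ g w := by
  obtain ⟨n, r, v, hr, hv, rfl⟩ := hw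
  simp only [map_sum, map_smul, smul_eq_mul]
  exact Finset.sum_nonneg fun i _ => mul_nonneg (hr i) (hS _ (hv i))

lemma eq_zero_of_mem_nnspan_of_map_eq_zero (g : V →ₗ[ℝ] ℝ) {S : Set V}
    (hS : ∀ y ∈ S, 0 < g y) {w : V} (hw : w ∈ nnspan S) (h0 : g w = 0) : w = 0 := by
  obtain ⟨n, r, v, hr, hv, rfl⟩ := hw
  simp only [map_sum, map_smul, smul_eq_mul] at h0
  have hterms := (Finset.sum_eq_zero_iff_of_nonneg
    fun i _ => mul_nonneg (hr i) (hS _ (hv i)).le).1 h0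
  have hr0 : ∀ i, r i = 0 := fun i =>
    (mul_eq_zero.1 (hterms i (Finset.mem_univ i))).resolve_right (hS _ (hv i)).ne'
  simp [hr0]

lemma smul_eq_zero_of_salient {S : Set V} (hS : nnspan S ∩ -nnspan S = {0})
    {a b : V} (ha : a ∈ S) (hb : b ∈ S) {r s : ℝ} (hr : 0 ≤ r) (hs : 0 ≤ s)
    (h : r • a + s • b = 0) : r • a = 0 := by
  have hmem : r • a ∈ nnspan S ∩ -nnspan S := by
    refine ⟨smul_mem_nnspan ha hr, ?_⟩
    rw [Set.mem_neg, neg_eq_of_add_eq_zero_right h]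
    exact smul_mem_nnspan hb hs
  rwa [hS] at hmem

lemma eq_zero_of_sub_mem_span_of_separating (f : V →ₗ[ℝ] ℝ) {B A C : Set V}
    (hB : ∀ y ∈ B, f y < 0) (hA : ∀ y ∈ A, 0 < f y) (hC : ∀ y ∈ C, f y = 0)
    {xm xp : V} (hxm : xm ∈ nnspan B) (hxp : xp ∈ nnspan A)
    (h : xm - xp ∈ Submodule.span ℝ C) : xm = 0 ∧ xp = 0 := by
  have hB' : ∀ y ∈ B, 0 < (-f) y := fun y hy => neg_pos.2 (hB y hy)
  have hker : f (xm - xp) = 0 :=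
    (Submodule.span_le (p := LinearMap.ker f)).2 hC h
  have hm : 0 ≤ -f xm := map_nonneg_of_mem_nnspan (-f) (fun y hy => (hB' y hy).le) hxm
  have hp : 0 ≤ f xp := map_nonneg_of_mem_nnspan f (fun y hy => (hA y hy).le) hxp
  rw [map_sub] at hker
  refine ⟨eq_zero_of_mem_nnspan_of_map_eq_zero (-f) hB' hxm ?_,
    eq_zero_of_mem_nnspan_of_map_eq_zero f hA hxp (by linarith)⟩
  rw [LinearMap.neg_apply]
  linarith

end NonnegSpan

lemma Complex.ne_add_pi_of_salient {S : Set ℂ} (hS : nnspan S ∩ -nnspan S = {0})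
    {a b : ℂ} (ha : a ∈ S) (hb : b ∈ S) (ha0 : a ≠ 0) (hb0 : b ≠ 0) {s t : ℝ}
    (hs : a = ‖a‖ * exp (s * I)) (ht : b = ‖b‖ * exp (t * I)) : t ≠ s + Real.pi := by
  rintro rfl
  have hb' : b = -(‖b‖ * exp (s * I)) := by
    conv_lhs => rw [ht, ofReal_add, add_mul, exp_add, exp_pi_mul_I]
    ring
  have hopp : ‖b‖ • a + ‖a‖ • b = 0 :=
    calc ‖b‖ • a + ‖a‖ • b = ‖b‖ * (‖a‖ * exp (s * I)) + ‖a‖ * -(‖b‖ * exp (s * I)) := by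
          rw [real_smul, real_smul, ← hs, ← hb']
      _ = 0 := by ring
  rcases smul_eq_zero.1 (smul_eq_zero_of_salient hS ha hb (norm_nonneg b) (norm_nonneg a) hopp)
    with h | h
  · exact hb0 (norm_eq_zero.1 h)
  · exact ha0 h

section Charge

variable {V : Type*} [AddCommGroup V] [Module ℝ V]

noncomputable def rotatedIm (c : V →ₗ[ℝ] ℂ) (α : ℝ) : V →ₗ[ℝ] ℝ :=
  imLm ∘ₗ LinearMap.mulRight ℝ (exp (-α * I)) ∘ₗ c

lemma rotatedIm_apply_of_polar {c : V →ₗ[ℝ] ℂ} {v : V} {t : ℝ}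
    (hv : c v = ‖c v‖ * exp (t * I)) (α : ℝ) :
    rotatedIm c α v = ‖c v‖ * Real.sin (t - α) := by
  have hexp : exp (t * I) * exp (-α * I) = exp ((t - α : ℝ) * I) := by
    rw [← exp_add]; push_cast; ring_nf
  simp only [rotatedIm, LinearMap.comp_apply, LinearMap.mulRight_apply, imLm_coe]
  conv_lhs => rw [hv, mul_assoc, hexp, im_ofReal_mul, exp_ofReal_mul_I_im]

lemma rotatedIm_neg_of_polar {c : V →ₗ[ℝ] ℂ} {v : V} {t α : ℝ}
    (hv : c v = ‖c v‖ * exp (t * I)) (hv0 : c v ≠ 0)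
    (h₁ : α - Real.pi < t) (h₂ : t < α) : rotatedIm c α v < 0 := by
  rw [rotatedIm_apply_of_polar hv]
  exact mul_neg_of_pos_of_neg (norm_pos_iff.2 hv0)
    (Real.sin_neg_of_neg_of_neg_pi_lt (by linarith) (by linarith))

lemma rotatedIm_pos_of_polar {c : V →ₗ[ℝ] ℂ} {v : V} {t α : ℝ}
    (hv : c v = ‖c v‖ * exp (t * I)) (hv0 : c v ≠ 0)
    (h₁ : α < t) (h₂ : t < α + Real.pi) : 0 < rotatedIm c α v := by
  rw [rotatedIm_apply_of_polar hv]
  exact mul_pos (norm_pos_iff.2 hv0) (Real.sin_pos_of_pos_of_lt_pi (by linarith) (by linarith))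

end Charge

theorem charge_convexPreorder_general {V : Type*} [AddCommGroup V] [Module ℝ V]
    (X : Set V)
    (c : V →ₗ[ℝ] ℂ)
    (hc0 : (0 : ℂ) ∉ c '' X)
    (hsal : nnspan (c '' X) ∩ (-nnspan (c '' X)) = {(0 : ℂ)})
    (argc : V → ℝ)
    (harg : ∀ x ∈ X, c x = (‖c x‖ : ℂ) * Complex.exp (argc x * Complex.I))
    (hbranch : ∃ θ : ℝ, ∀ x ∈ X, argc x ∈ Set.Icc θ (θ + Real.pi)) :
    IsConvexPreorder X (fun x y => argc x ≤ argc y) := by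
  obtain ⟨θ, hθ⟩ := hbranch
  have hne : ∀ y ∈ X, c y ≠ 0 := fun y hy h => hc0 ⟨y, hy, h⟩
  have hnot_opp : ∀ y ∈ X, ∀ z ∈ X, argc z ≠ argc y + Real.pi := fun y hy z hz =>
    ne_add_pi_of_salient hsal ⟨y, hy, rfl⟩ ⟨z, hz, rfl⟩ (hne y hy) (hne z hz) (harg y hy)
      (harg z hz)
  refine ⟨fun _ _ => le_rfl, fun _ _ _ _ _ _ => le_trans, fun _ _ _ _ => le_total _ _, ?_⟩
  intro x hx xm hxm xp hxp hspan
  refine eq_zero_of_sub_mem_span_of_separating (rotatedIm c (argc x)) ?_ ?_ ?_ hxm hxp hspan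
  · rintro y ⟨hy, -, hlt⟩
    have hopp := hnot_opp y hy x hx
    refine rotatedIm_neg_of_polar (harg y hy) (hne y hy) ?_ (not_le.1 hlt)
    exact lt_of_le_of_ne (by linarith [(hθ x hx).2, (hθ y hy).1]) (by contrapose! hopp; linarith)
  · rintro y ⟨hy, -, hlt⟩
    refine rotatedIm_pos_of_polar (harg y hy) (hne y hy) (not_le.1 hlt) ?_
    exact lt_of_le_of_ne (by linarith [(hθ x hx).1, (hθ y hy).2]) (hnot_opp x hx y hy)
  · rintro y ⟨hy, hxy, hyx⟩
    rw [rotatedIm_apply_of_polar (harg y hy), le_antisymm hyx hxy, sub_self, Real.sin_zero,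
      mul_zero]

/-- Let `c : V → ℂ` be a charge on `X ⊆ V \ {0}` (an `ℝ`-linear map
with `0 ∉ c(X)` and `nnspan c(X) ∩ (-nnspan c(X)) = {0}`), and let `arg_c` be a
continuous argument function of `c` on `X` (its values lie in an interval of length
`π`). Then `x ⪯_c y ↔ arg_c x ≤ arg_c y` is a convex preorder on `X`. -/
theorem charge_convexPreorder {V : Type*} [AddCommGroup V] [Module ℝ V]
    [FiniteDimensional ℝ V]
    (X : Set V) (hX0 : (0 : V) ∉ X)
    (c : V →ₗ[ℝ] ℂ)
    (hc0 : (0 : ℂ) ∉ c '' X)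
    (hsal : nnspan (c '' X) ∩ (-nnspan (c '' X)) = {(0 : ℂ)})
    (argc : V → ℝ)
    (harg : ∀ x ∈ X, c x = (‖c x‖ : ℂ) * Complex.exp (argc x * Complex.I))
    (hbranch : ∃ θ : ℝ, ∀ x ∈ X, argc x ∈ Set.Icc θ (θ + Real.pi)) :
    IsConvexPreorder X (fun x y => argc x ≤ argc y) :=
  charge_convexPreorder_general X c hc0 hsal argc harg hbranch
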